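/- If within each phase each shared variable's value register stores both its old and new values in a two-element array indexed by a toggle bit, and a successful SC in phase l writes the new value into slot 1−toggle and flips toggle while setting seq := l, then a reader comparing its own phase number s to the variable's seq can always recover the value as of the start of its phase: if seq = s it reads slot 1−toggle (the old value), and if seq < s it reads slot toggle (the current value). -/
import Mathlib


/-- A shared variable record: two-slot value array, toggle bit, sequence number. -/
structure VarRec (V : Type*) where
  val : Fin 2 → V
  toggle : Fin 2
  seq : ℕ

lemma fin2_sub_sub (t : Fin 2) : 1 - (1 - t) = t := by fin_cases t <;> rfl

/-- Old/new value recovery: `hist l` is the record at the end of phase `l`; in each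
phase either nothing changes, or one successful SC (requiring `seq < l`) writes the new
value into slot `1 - toggle`, flips the toggle and sets `seq := l`, preserving the old
current value in the other slot. A reader in phase `s` holding a record with `seq ≤ s`
recovers the variable's value as of the end of phase `s - 1`: slot `1 - toggle` if
`seq = s`, slot `toggle` otherwise. -/
theorem read_recovers_phase_value {V : Type*} (hist : ℕ → VarRec V)
    (h0 : (hist 0).seq = 0)
    (hstep : ∀ l : ℕ, 1 ≤ l →
      hist l = hist (l - 1) ∨
      ((hist (l - 1)).seq < l ∧ (hist l).seq = l ∧
       (hist l).toggle = 1 - (hist (l - 1)).toggle ∧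
       (hist l).val ((hist (l - 1)).toggle) =
         (hist (l - 1)).val ((hist (l - 1)).toggle)))
    (s : ℕ) (hs : 1 ≤ s) (m : ℕ) (hm : s - 1 ≤ m)
    (hseq : (hist m).seq ≤ s) :
    (if (hist m).seq = s then (hist m).val (1 - (hist m).toggle)
     else (hist m).val (hist m).toggle) =
      (hist (s - 1)).val ((hist (s - 1)).toggle) := by
  have seq_le : ∀ l : ℕ, (hist l).seq ≤ l := by
    intro l
    induction l with
    | zero => omega
    | succ n ih =>
      rcases hstep (n + 1) (by omega) with h | h
      · simp only [Nat.add_sub_cancel] at h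
        rw [h]; omega
      · simp only [Nat.add_sub_cancel] at h
        omega
  induction m, hm using Nat.le_induction with
  | base =>
    have : (hist (s - 1)).seq ≤ s - 1 := seq_le _
    rw [if_neg (by omega)]
  | succ m hm ih =>
    rcases hstep (m + 1) (by omega) with h | h
    · simp only [Nat.add_sub_cancel] at h
      rw [h]
      exact ih (h ▸ hseq)
    · simp only [Nat.add_sub_cancel] at h
      obtain ⟨h1, h2, h3, h4⟩ := h
      have hms : m + 1 = s := by omega
      have hm' : m = s - 1 := by omega
      rw [if_pos (by omega), h3, fin2_sub_sub, h4, hm']
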